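/- arXiv:2312.03188 — 2 statements merged into one kernel-verified Lean document; each statement's English description precedes it below -/
import Mathlib

section
/- For all integers d ≥ 1 and n ≥ 1, the following combinatorial identity holds: d^{n+1} = Σ_{λ ⊢ n−1, len(λ) ≤ d} (Σ_{a ∈ AC_d(λ)} f^{λ∪a}) · m_λ + Σ_{μ ⊢ n, len(μ) ≤ d−1} f^μ · m_{(μ_1,…,μ_{d−1},−1)}, where m_{(μ_1,…,μ_{d−1},−1)} is the Weyl dimension of the weakly decreasing integer vector obtained from μ by padding with zeros to length d−1 and appending a final entry −1. -/
open scoped BigOperators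

noncomputable section

attribute [local instance] Classical.propDecidable

/-- A cell of a Young diagram, 0-based: `(i, j)` is row `i`, column `j`. -/
abbrev Cell : Type := ℕ × ℕ

/-- The content of a cell `(i,j)` is `j - i`. -/
def cont (u : Cell) : ℤ := (u.2 : ℤ) - (u.1 : ℤ)

/-- A finite set of cells is a Young diagram if it is a lower set. -/
def IsYD (μ : Finset Cell) : Prop := IsLowerSet (μ : Set Cell)

/-- A cell `a ∉ μ` is addable if inserting it yields a Young diagram. -/
def Addable (μ : Finset Cell) (a : Cell) : Prop := a ∉ μ ∧ IsYD (insert a μ)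

/-- A cell `c ∈ μ` is removable if deleting it yields a Young diagram. -/
def Removable (μ : Finset Cell) (c : Cell) : Prop := c ∈ μ ∧ IsYD (μ.erase c)

/-- The finset of addable cells of `μ` (they all lie in a `(|μ|+1) × (|μ|+1)` box). -/
def AC (μ : Finset Cell) : Finset Cell :=
  ((Finset.range (μ.card + 1)) ×ˢ (Finset.range (μ.card + 1))).filter (fun a => Addable μ a)

/-- The finset of removable cells of `μ`. -/
def RC (μ : Finset Cell) : Finset Cell := μ.filter (fun c => Removable μ c)

/-- Length of the `i`-th row (0-based), i.e. the part `μ_{i+1}`. -/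
def rowLen (μ : Finset Cell) (i : ℕ) : ℕ := (μ.filter (fun c => c.1 = i)).card

/-- The number of (nonempty) rows of `μ`. -/
def len (μ : Finset Cell) : ℕ := (μ.filter (fun c => c.2 = 0)).card

/-- Addable cells whose addition keeps at most `d` rows. -/
def ACd (d : ℕ) (μ : Finset Cell) : Finset Cell :=
  (AC μ).filter (fun a => len (insert a μ) ≤ d)

/-- The number of standard Young tableaux of shape `μ`, as the number of saturated chains
`∅ = T 0 ⊂ T 1 ⊂ ⋯ ⊂ T |μ| = μ` of Young diagrams with `|T k| = k`. -/
def sytCount (μ : Finset Cell) : ℕ :=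
  Nat.card {T : ℕ → Finset Cell //
    (∀ k, IsYD (T k)) ∧ (∀ k, (T k).card = min k μ.card) ∧
    (∀ k, T k ⊆ T (k + 1)) ∧ (∀ k, μ.card ≤ k → T k = μ)}

/-- Weyl dimension formula for a weakly decreasing integer vector `Λ` of length `d`. -/
def weylDimVec (d : ℕ) (Λ : ℕ → ℤ) : ℚ :=
  ∏ p ∈ ((Finset.range d) ×ˢ (Finset.range d)).filter (fun p => p.1 < p.2),
    (((Λ p.1 : ℚ) - (Λ p.2 : ℚ) + (p.2 : ℚ) - (p.1 : ℚ)) / ((p.2 : ℚ) - (p.1 : ℚ)))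

/-- Weyl dimension `m_μ` of the irrep of `U(d)` labelled by a partition `μ` with at most
`d` rows (padded with zeros). -/
def weylDim (d : ℕ) (μ : Finset Cell) : ℚ := weylDimVec d (fun i => (rowLen μ i : ℤ))

/-- All Young diagrams with `k` cells (they fit in a `k × k` box). -/
def YDs (k : ℕ) : Finset (Finset Cell) :=
  ((Finset.range k ×ˢ Finset.range k).powerset).filter (fun μ => IsYD μ ∧ μ.card = k)

end


open Polynomial Finset in

theorem lagrange_key {F : Type*} [Field F] {ι : Type*} [DecidableEq ι] (s : Finset ι) (v : ι → F)
    (hv : Set.InjOn v s) (c : F) (hc : c ≠ 0) :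
    ∑ i ∈ s, ∏ j ∈ s.erase i, ((v i + c - v j) / (v i - v j)) = (s.card : F) := by
  rcases s.eq_empty_or_nonempty with rfl | hs
  · simp
  have hn : 0 < s.card := hs.card_pos
  set f : F[X] := (∏ j ∈ s, (X - C (v j - c))) - ∏ j ∈ s, (X - C (v j)) with hf
  have hmon1 : (∏ j ∈ s, (X - C (v j - c))).Monic :=
    monic_prod_of_monic _ _ fun j _ => monic_X_sub_C _
  have hmon2 : (∏ j ∈ s, (X - C (v j))).Monic :=
    monic_prod_of_monic _ _ fun j _ => monic_X_sub_C _
  have hdeg1 : (∏ j ∈ s, (X - C (v j - c))).natDegree = s.card := by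
    rw [natDegree_prod_of_monic _ _ fun j _ => monic_X_sub_C _]
    simp only [natDegree_X_sub_C]
    simp
  have hdeg2 : (∏ j ∈ s, (X - C (v j))).natDegree = s.card := by
    rw [natDegree_prod_of_monic _ _ fun j _ => monic_X_sub_C _]
    simp [natDegree_X_sub_C]
  have hdf : f.degree < s.card := by
    have h1 := degree_sub_lt (p := ∏ j ∈ s, (X - C (v j - c))) (q := ∏ j ∈ s, (X - C (v j)))
      (by rw [degree_eq_natDegree hmon1.ne_zero, degree_eq_natDegree hmon2.ne_zero, hdeg1, hdeg2])
      hmon1.ne_zero (by rw [hmon1.leadingCoeff, hmon2.leadingCoeff])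
    calc f.degree < (∏ j ∈ s, (X - C (v j - c))).degree := h1
      _ = (s.card : WithBot ℕ) := by rw [degree_eq_natDegree hmon1.ne_zero, hdeg1]
  -- coefficient of f at s.card - 1
  have hcoeff : f.coeff (s.card - 1) = s.card * c := by
    rw [hf, coeff_sub, prod_X_sub_C_coeff_card_pred s _ hn, prod_X_sub_C_coeff_card_pred s _ hn,
      neg_sub_neg, ← Finset.sum_sub_distrib]
    simp [Finset.sum_const, nsmul_eq_mul, mul_comm]
  -- interpolation
  have hinterp : f = Lagrange.interpolate s v (fun i => f.eval (v i)) :=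
    Lagrange.eq_interpolate hv hdf
  -- coefficient of basis polynomial
  have hbasis : ∀ i ∈ s, (Lagrange.basis s v i).coeff (s.card - 1) =
      ∏ j ∈ s.erase i, (v i - v j)⁻¹ := by
    intro i hi
    have hcard : (s.erase i).card = s.card - 1 := Finset.card_erase_of_mem hi
    rw [Lagrange.basis]
    have : ∏ j ∈ s.erase i, Lagrange.basisDivisor (v i) (v j) =
        C (∏ j ∈ s.erase i, (v i - v j)⁻¹) * ∏ j ∈ s.erase i, (X - C (v j)) := by
      rw [map_prod, ← Finset.prod_mul_distrib]
      exact Finset.prod_congr rfl fun j _ => rfl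
    rw [this, coeff_C_mul, ← hcard]
    have hm : (∏ j ∈ s.erase i, (X - C (v j))).Monic :=
      monic_prod_of_monic _ _ fun j _ => monic_X_sub_C _
    have hd : (∏ j ∈ s.erase i, (X - C (v j))).natDegree = (s.erase i).card := by
      rw [natDegree_prod_of_monic _ _ fun j _ => monic_X_sub_C _]
      simp [natDegree_X_sub_C]
    rw [← hd, hm.coeff_natDegree, mul_one]
  -- eval f at v i
  have heval : ∀ i ∈ s, f.eval (v i) = c * ∏ j ∈ s.erase i, (v i + c - v j) := by
    intro i hi
    rw [hf, eval_sub, eval_prod, eval_prod]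
    simp only [eval_sub, eval_X, eval_C]
    rw [← Finset.mul_prod_erase s (fun j => v i - v j) hi, sub_self, zero_mul, sub_zero,
      ← Finset.mul_prod_erase s (fun j => v i - (v j - c)) hi]
    have : v i - (v i - c) = c := by ring
    rw [this]
    congr 1
    exact Finset.prod_congr rfl fun j _ => by ring
  have key : (s.card : F) * c = ∑ i ∈ s, (c * ∏ j ∈ s.erase i, (v i + c - v j)) *
      ∏ j ∈ s.erase i, (v i - v j)⁻¹ := by
    calc (s.card : F) * c = f.coeff (s.card - 1) := hcoeff.symm
      _ = (Lagrange.interpolate s v (fun i => f.eval (v i))).coeff (s.card - 1) := by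
          rw [← hinterp]
      _ = ∑ i ∈ s, f.eval (v i) * (Lagrange.basis s v i).coeff (s.card - 1) := by
          rw [Lagrange.interpolate_apply, finset_sum_coeff]
          exact Finset.sum_congr rfl fun i hi => by rw [coeff_C_mul]
      _ = _ := Finset.sum_congr rfl fun i hi => by rw [heval i hi, hbasis i hi]
  have : (s.card : F) * c = (∑ i ∈ s, ∏ j ∈ s.erase i, ((v i + c - v j) / (v i - v j))) * c := by
    rw [key, Finset.sum_mul]
    refine Finset.sum_congr rfl fun i hi => ?_
    rw [Finset.prod_div_distrib, div_eq_mul_inv, ← Finset.prod_inv_distrib]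
    ring
  exact (mul_right_cancel₀ hc this.symm)


section YDlem
variable {μ : Finset Cell}

/-- downward closed finsets of ℕ are initial segments -/
lemma nat_lower {J : Finset ℕ} (h : ∀ ⦃a b : ℕ⦄, a ≤ b → b ∈ J → a ∈ J) (j : ℕ) :
    j ∈ J ↔ j < J.card := by
  constructor
  · intro hj
    have hsub : Finset.range (j + 1) ⊆ J := fun k hk =>
      h (Nat.lt_succ_iff.mp (Finset.mem_range.mp hk)) hj
    have := Finset.card_le_card hsub
    simpa using this
  · intro hj
    by_contra hjJ
    have hsub : J ⊆ Finset.range j := by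
      intro k hk
      rw [Finset.mem_range]
      by_contra hkj
      exact hjJ (h (Nat.le_of_not_lt hkj) hk)
    have := Finset.card_le_card hsub
    simp at this
    omega

lemma mem_iff_lt_rowLen (hμ : IsYD μ) (i j : ℕ) : (i, j) ∈ μ ↔ j < rowLen μ i := by
  set J := (μ.filter (fun c => c.1 = i)).image Prod.snd with hJ
  have hmem : ∀ j, (i, j) ∈ μ ↔ j ∈ J := by
    intro j
    simp only [hJ, Finset.mem_image, Finset.mem_filter]
    constructor
    · intro h; exact ⟨(i, j), ⟨h, rfl⟩, rfl⟩
    · rintro ⟨⟨i', j'⟩, ⟨hc, hc1⟩, hc2⟩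
      cases hc1; cases hc2; exact hc
  have hcard : J.card = rowLen μ i := by
    rw [hJ, rowLen, Finset.card_image_of_injOn]
    rintro ⟨i1, j1⟩ h1 ⟨i2, j2⟩ h2 hj
    simp only [Finset.coe_filter, Set.mem_setOf_eq] at h1 h2
    simp only at hj
    simp [h1.2, h2.2, hj]
  have hlow : ∀ ⦃a b : ℕ⦄, a ≤ b → b ∈ J → a ∈ J := by
    intro a b hab hb
    rw [← hmem] at hb ⊢
    exact hμ (Prod.mk_le_mk.mpr ⟨le_refl i, hab⟩) hb
  rw [hmem, ← hcard]
  exact nat_lower hlow j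

lemma rowLen_anti (hμ : IsYD μ) {i i' : ℕ} (h : i ≤ i') : rowLen μ i' ≤ rowLen μ i := by
  by_contra hlt
  push_neg at hlt
  have h1 : (i', rowLen μ i) ∈ μ := (mem_iff_lt_rowLen hμ _ _).mpr hlt
  have h2 : (i, rowLen μ i) ∈ μ := hμ (Prod.mk_le_mk.mpr ⟨h, le_refl _⟩) h1
  exact absurd ((mem_iff_lt_rowLen hμ _ _).mp h2) (lt_irrefl _)

lemma cell_bound (hμ : IsYD μ) {i j : ℕ} (h : (i, j) ∈ μ) : i < μ.card ∧ j < μ.card := by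
  constructor
  · have hsub : (Finset.range (i + 1)).image (fun k => ((k, 0) : Cell)) ⊆ μ := by
      intro c hc
      simp only [Finset.mem_image, Finset.mem_range] at hc
      obtain ⟨k, hk, rfl⟩ := hc
      exact hμ (Prod.mk_le_mk.mpr ⟨Nat.lt_succ_iff.mp hk, Nat.zero_le _⟩) h
    have := Finset.card_le_card hsub
    rw [Finset.card_image_of_injective _ (fun a b hab => by simpa using hab)] at this
    simp at this; omega
  · have hsub : (Finset.range (j + 1)).image (fun k => ((i, k) : Cell)) ⊆ μ := by
      intro c hc
      simp only [Finset.mem_image, Finset.mem_range] at hc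
      obtain ⟨k, hk, rfl⟩ := hc
      exact hμ (Prod.mk_le_mk.mpr ⟨le_refl _, Nat.lt_succ_iff.mp hk⟩) h
    have := Finset.card_le_card hsub
    rw [Finset.card_image_of_injective _ (fun a b hab => by simpa using hab)] at this
    simp at this; omega

lemma rowLen_le_card (i : ℕ) : rowLen μ i ≤ μ.card := Finset.card_le_card (Finset.filter_subset _ _)


lemma lt_len_iff (hμ : IsYD μ) (i : ℕ) : i < len μ ↔ 0 < rowLen μ i := by
  set I := (μ.filter (fun c => c.2 = 0)).image Prod.fst with hI
  have hmem : ∀ i, (i, 0) ∈ μ ↔ i ∈ I := by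
    intro i
    simp only [hI, Finset.mem_image, Finset.mem_filter]
    constructor
    · intro h; exact ⟨(i, 0), ⟨h, rfl⟩, rfl⟩
    · rintro ⟨⟨i', j'⟩, ⟨hc, hc1⟩, hc2⟩
      cases hc1; cases hc2; exact hc
  have hcard : I.card = len μ := by
    rw [hI, len, Finset.card_image_of_injOn]
    rintro ⟨i1, j1⟩ h1 ⟨i2, j2⟩ h2 hj
    simp only [Finset.coe_filter, Set.mem_setOf_eq] at h1 h2
    simp only at hj
    simp [h1.2, h2.2, hj]
  have hlow : ∀ ⦃a b : ℕ⦄, a ≤ b → b ∈ I → a ∈ I := by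
    intro a b hab hb
    rw [← hmem] at hb ⊢
    exact hμ (Prod.mk_le_mk.mpr ⟨hab, le_refl 0⟩) hb
  rw [← hcard, ← nat_lower hlow i, ← hmem, mem_iff_lt_rowLen hμ]

lemma len_le_iff (hμ : IsYD μ) (k : ℕ) : len μ ≤ k ↔ rowLen μ k = 0 := by
  have := lt_len_iff hμ k
  omega

lemma rowLen_insert {a : Cell} (ha : a ∉ μ) (k : ℕ) :
    rowLen (insert a μ) k = if k = a.1 then rowLen μ k + 1 else rowLen μ k := by
  classical
  unfold rowLen
  rw [Finset.filter_insert]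
  split_ifs with h1 h2 h2
  · rw [Finset.card_insert_of_notMem (fun hc => ha (Finset.mem_filter.mp hc).1)]
  · exact absurd h1.symm h2
  · exact absurd h2.symm h1
  · rfl

lemma rowLen_erase {c : Cell} (hc : c ∈ μ) (k : ℕ) :
    rowLen (μ.erase c) k = if k = c.1 then rowLen μ k - 1 else rowLen μ k := by
  classical
  unfold rowLen
  split_ifs with h1
  · subst h1
    rw [Finset.filter_erase, Finset.card_erase_of_mem]
    exact Finset.mem_filter.mpr ⟨hc, rfl⟩
  · rw [Finset.filter_erase, Finset.erase_eq_of_notMem]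
    intro hmem
    exact h1 ((Finset.mem_filter.mp hmem).2).symm

lemma addable_iff (hμ : IsYD μ) (i j : ℕ) :
    Addable μ (i, j) ↔ j = rowLen μ i ∧ (i = 0 ∨ rowLen μ i < rowLen μ (i - 1)) := by
  constructor
  · rintro ⟨hnot, hins⟩
    have hge : rowLen μ i ≤ j := by
      by_contra h
      exact hnot ((mem_iff_lt_rowLen hμ i j).mpr (by omega))
    have hle : j ≤ rowLen μ i := by
      by_contra h
      push_neg at h
      have hj' : ((i, rowLen μ i) : Cell) ∈ insert (i, j) μ :=
        hins (Prod.mk_le_mk.mpr ⟨le_refl _, le_of_lt h⟩) (Finset.mem_insert_self _ _)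
      rcases Finset.mem_insert.mp hj' with heq | hmem
      · have := (Prod.mk.injEq _ _ _ _).mp heq
        omega
      · exact absurd ((mem_iff_lt_rowLen hμ _ _).mp hmem) (lt_irrefl _)
    refine ⟨le_antisymm hle hge, ?_⟩
    rcases Nat.eq_zero_or_pos i with h0 | hpos
    · exact Or.inl h0
    · right
      have hup : ((i - 1, j) : Cell) ∈ insert (i, j) μ :=
        hins (Prod.mk_le_mk.mpr ⟨Nat.sub_le _ _, le_refl _⟩) (Finset.mem_insert_self _ _)
      rcases Finset.mem_insert.mp hup with heq | hmem
      · have := (Prod.mk.injEq _ _ _ _).mp heq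
        omega
      · have := (mem_iff_lt_rowLen hμ _ _).mp hmem
        omega
  · rintro ⟨hj, hcond⟩
    subst hj
    refine ⟨fun h => absurd ((mem_iff_lt_rowLen hμ _ _).mp h) (lt_irrefl _), ?_⟩
    rintro ⟨p, q⟩ ⟨p', q'⟩ hle hmem
    -- hle : (p',q') ≤ (p,q), hmem : (p,q) ∈ insert, goal : (p',q') ∈ insert
    simp only [Finset.coe_insert, Set.mem_insert_iff, Finset.mem_coe] at hmem ⊢
    obtain ⟨hp, hq⟩ := Prod.mk_le_mk.mp hle
    rcases hmem with heq | hmem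
    · -- (p, q) = (i, rowLen μ i)
      obtain ⟨hpi, hqr⟩ := (Prod.mk.injEq _ _ _ _).mp heq
      by_cases hcase : p' = p ∧ q' = q
      · left
        rw [Prod.mk.injEq, hcase.1, hcase.2, hpi, hqr]
        exact ⟨rfl, rfl⟩
      · right
        subst hpi
        rw [mem_iff_lt_rowLen hμ]
        rcases Nat.lt_or_ge p' p with hlt | hge
        · rcases hcond with h0 | hrow
          · omega
          · have h1 : rowLen μ (p - 1) ≤ rowLen μ p' := rowLen_anti hμ (by omega)
            omega
        · have hpp : p' = p := le_antisymm hp hge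
          have : q' ≠ q := fun h => hcase ⟨hpp, h⟩
          subst hpp
          omega
    · right
      rw [mem_iff_lt_rowLen hμ]
      rw [mem_iff_lt_rowLen hμ] at hmem
      have : rowLen μ p ≤ rowLen μ p' := rowLen_anti hμ hp
      omega

lemma removable_iff (hμ : IsYD μ) (i j : ℕ) :
    Removable μ (i, j) ↔ j + 1 = rowLen μ i ∧ rowLen μ (i + 1) ≤ j := by
  constructor
  · rintro ⟨hmem, hers⟩
    have hjlt : j < rowLen μ i := (mem_iff_lt_rowLen hμ _ _).mp hmem
    have h1 : rowLen μ i ≤ j + 1 := by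
      by_contra h
      push_neg at h
      have hj1 : ((i, j + 1) : Cell) ∈ μ.erase (i, j) := by
        rw [Finset.mem_erase]
        exact ⟨by simp, (mem_iff_lt_rowLen hμ _ _).mpr h⟩
      have : ((i, j) : Cell) ∈ μ.erase (i, j) :=
        hers (Prod.mk_le_mk.mpr ⟨le_refl _, by omega⟩) hj1
      simp at this
    have h2 : rowLen μ (i + 1) ≤ j := by
      by_contra h
      push_neg at h
      have hj1 : ((i + 1, j) : Cell) ∈ μ.erase (i, j) := by
        rw [Finset.mem_erase]
        exact ⟨by simp, (mem_iff_lt_rowLen hμ _ _).mpr h⟩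
      have : ((i, j) : Cell) ∈ μ.erase (i, j) :=
        hers (Prod.mk_le_mk.mpr ⟨by omega, le_refl _⟩) hj1
      simp at this
    exact ⟨by omega, h2⟩
  · rintro ⟨h1, h2⟩
    have hmem : ((i, j) : Cell) ∈ μ := (mem_iff_lt_rowLen hμ _ _).mpr (by omega)
    refine ⟨hmem, ?_⟩
    rintro ⟨p, q⟩ ⟨p', q'⟩ hle hmem'
    -- hle : (p',q') ≤ (p,q), hmem' : (p,q) ∈ erase, goal : (p',q') ∈ erase
    simp only [Finset.coe_erase, Set.mem_diff, Set.mem_singleton_iff, Finset.mem_coe] at hmem' ⊢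
    obtain ⟨hmem'', hne⟩ := hmem'
    obtain ⟨hp, hq⟩ := Prod.mk_le_mk.mp hle
    have hmemμ : ((p', q') : Cell) ∈ μ := hμ hle hmem''
    refine ⟨hmemμ, ?_⟩
    intro heq
    obtain ⟨hpi, hqj⟩ := (Prod.mk.injEq _ _ _ _).mp heq
    subst hpi; subst hqj
    -- now p' = i, q' = j, and (i,j) ≤ (p,q) ∈ μ, (p,q) ≠ (i,j)
    have hqlt : q < rowLen μ p := (mem_iff_lt_rowLen hμ _ _).mp hmem''
    rcases Nat.lt_or_ge p (p' + 1) with hlt | hge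
    · have hpp : p = p' := by omega
      subst hpp
      have : q = q' := by omega
      exact hne (by simp [this])
    · have : rowLen μ p ≤ rowLen μ (p' + 1) := rowLen_anti hμ hge
      omega

end YDlem


section WD
lemma weylDimVec_congr (d : ℕ) (Λ Λ' : ℕ → ℤ) (h : ∀ i < d, Λ i = Λ' i) :
    weylDimVec d Λ = weylDimVec d Λ' := by
  unfold weylDimVec
  refine Finset.prod_congr rfl fun p hp => ?_
  simp only [Finset.mem_filter, Finset.mem_product, Finset.mem_range] at hp
  rw [h p.1 hp.1.1, h p.2 hp.1.2]

lemma weylDimVec_ratio (d : ℕ) (Λ : ℕ → ℤ) (i : ℕ) (hi : i < d) (ε : ℤ)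
    (hx : ∀ j < d, j ≠ i → (Λ i : ℚ) - (Λ j : ℚ) + (j : ℚ) - (i : ℚ) ≠ 0) :
    weylDimVec d (fun k => if k = i then Λ i + ε else Λ k)
      = (∏ j ∈ (Finset.range d).erase i,
          (((Λ i : ℚ) + (ε : ℚ) - (Λ j : ℚ) + (j : ℚ) - (i : ℚ)) /
            ((Λ i : ℚ) - (Λ j : ℚ) + (j : ℚ) - (i : ℚ)))) * weylDimVec d Λ := by
  classical
  set P := ((Finset.range d) ×ˢ (Finset.range d)).filter (fun p : ℕ × ℕ => p.1 < p.2) with hP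
  set g : ℕ → ℚ := fun j =>
    (((Λ i : ℚ) + (ε : ℚ) - (Λ j : ℚ) + (j : ℚ) - (i : ℚ)) /
      ((Λ i : ℚ) - (Λ j : ℚ) + (j : ℚ) - (i : ℚ))) with hg
  set h : ℕ × ℕ → ℚ := fun p => if p.1 = i then g p.2 else if p.2 = i then g p.1 else 1 with hh
  set F : ℕ × ℕ → ℚ := fun p =>
    (((Λ p.1 : ℚ) - (Λ p.2 : ℚ) + (p.2 : ℚ) - (p.1 : ℚ)) / ((p.2 : ℚ) - (p.1 : ℚ))) with hF
  have hstepA : ∀ p ∈ P, ((((fun k => if k = i then Λ i + ε else Λ k) p.1 : ℤ) : ℚ) -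
      (((fun k => if k = i then Λ i + ε else Λ k) p.2 : ℤ) : ℚ) + (p.2 : ℚ) - (p.1 : ℚ)) /
      ((p.2 : ℚ) - (p.1 : ℚ)) = F p * h p := by
    rintro ⟨a, b⟩ hp
    simp only [hP, Finset.mem_filter, Finset.mem_product, Finset.mem_range] at hp
    obtain ⟨⟨ha, hb⟩, hab⟩ := hp
    have hba : (b : ℚ) - (a : ℚ) ≠ 0 := by
      have : (a : ℚ) < b := by exact_mod_cast hab
      intro hzero; linarith
    simp only [hF, hh, hg]
    by_cases h1 : a = i
    · have h2 : b ≠ i := by omega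
      rw [if_pos h1, if_neg h2, if_pos h1]
      have hd2 : (Λ i : ℚ) - (Λ b : ℚ) + (b : ℚ) - (i : ℚ) ≠ 0 := hx b hb h2
      rw [h1] at hba ⊢
      push_cast
      field_simp
    · rw [if_neg h1]
      by_cases h2 : b = i
      · rw [if_pos h2, if_neg h1, if_pos h2]
        have hd2 : (Λ i : ℚ) - (Λ a : ℚ) + (a : ℚ) - (i : ℚ) ≠ 0 := hx a ha h1
        rw [h2] at hba ⊢
        push_cast
        field_simp
        ring
      · rw [if_neg h2, if_neg h1, if_neg h2, mul_one]
  have hstepC : ∏ p ∈ P, h p = ∏ j ∈ (Finset.range d).erase i, g j := by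
    rw [← Finset.prod_filter_of_ne (f := h) (p := fun p : ℕ × ℕ => p.1 = i ∨ p.2 = i)
      (fun p _ hne => by
        by_contra hcon
        rw [not_or] at hcon
        exact hne (by simp only [hh]; rw [if_neg hcon.1, if_neg hcon.2]))]
    refine Finset.prod_nbij' (fun p => if p.1 = i then p.2 else p.1)
      (fun j => if j < i then (j, i) else (i, j)) ?_ ?_ ?_ ?_ ?_
    · rintro ⟨a, b⟩ hp
      simp only [hP, Finset.mem_filter, Finset.mem_product, Finset.mem_range] at hp
      obtain ⟨⟨⟨ha, hb⟩, hab⟩, hor⟩ := hp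
      simp only [Finset.mem_erase, Finset.mem_range]
      beta_reduce
      by_cases h1 : a = i
      · rw [if_pos h1]; exact ⟨by omega, hb⟩
      · rw [if_neg h1]
        rcases hor with hc | hc
        · exact absurd hc h1
        · exact ⟨by omega, ha⟩
    · intro j hj
      simp only [Finset.mem_erase, Finset.mem_range] at hj
      simp only [hP, Finset.mem_filter, Finset.mem_product, Finset.mem_range]
      beta_reduce
      by_cases hji : j < i
      · rw [if_pos hji]
        exact ⟨⟨⟨by omega, hi⟩, hji⟩, Or.inr rfl⟩
      · rw [if_neg hji]
        exact ⟨⟨⟨hi, hj.2⟩, by omega⟩, Or.inl rfl⟩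
    · rintro ⟨a, b⟩ hp
      simp only [hP, Finset.mem_filter, Finset.mem_product, Finset.mem_range] at hp
      obtain ⟨⟨⟨ha, hb⟩, hab⟩, hor⟩ := hp
      beta_reduce
      by_cases h1 : a = i
      · rw [if_pos h1, if_neg (by omega : ¬ b < i), h1]
      · rcases hor with hc | hc
        · exact absurd hc h1
        · rw [if_neg h1, if_pos (by omega : a < i), hc]
    · intro j hj
      simp only [Finset.mem_erase, Finset.mem_range] at hj
      beta_reduce
      by_cases hji : j < i
      · rw [if_pos hji, if_neg (by omega : ¬ j = i)]
      · rw [if_neg hji, if_pos rfl]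
    · rintro ⟨a, b⟩ hp
      simp only [hP, Finset.mem_filter, Finset.mem_product, Finset.mem_range] at hp
      obtain ⟨⟨⟨ha, hb⟩, hab⟩, hor⟩ := hp
      simp only [hh]
      beta_reduce
      by_cases h1 : a = i
      · rw [if_pos h1, if_pos h1]
      · rcases hor with hc | hc
        · exact absurd hc h1
        · rw [if_neg h1, if_pos hc, if_neg h1]
  calc weylDimVec d (fun k => if k = i then Λ i + ε else Λ k)
      = ∏ p ∈ P, (F p * h p) := Finset.prod_congr rfl hstepA
    _ = (∏ p ∈ P, F p) * ∏ p ∈ P, h p := Finset.prod_mul_distrib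
    _ = _ := by rw [hstepC, mul_comm]; rfl

end WD


section Pieri
variable {μ : Finset Cell} {d : ℕ}

lemma len_le_card (μ : Finset Cell) : len μ ≤ μ.card := Finset.card_le_card (Finset.filter_subset _ _)

lemma ACd_eq_image (hμ : IsYD μ) (h0 : rowLen μ d = 0) :
    ACd d μ = ((Finset.range d).filter
        (fun i => i = 0 ∨ rowLen μ i < rowLen μ (i - 1))).image
      (fun i => ((i, rowLen μ i) : Cell)) := by
  classical
  ext a
  obtain ⟨i, j⟩ := a
  simp only [ACd, AC, Finset.mem_image, Finset.mem_filter, Finset.mem_product, Finset.mem_range]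
  constructor
  · rintro ⟨⟨⟨hbox1, hbox2⟩, hadd⟩, hlen⟩
    obtain ⟨hj, hcond⟩ := (addable_iff hμ i j).mp hadd
    have hins : IsYD (insert ((i, j) : Cell) μ) := hadd.2
    have hnot : ((i, j) : Cell) ∉ μ := hadd.1
    have hrd : rowLen (insert ((i, j) : Cell) μ) d = 0 := (len_le_iff hins d).mp hlen
    have hid : i < d := by
      by_contra hcon
      push_neg at hcon
      have h1 : rowLen (insert ((i, j) : Cell) μ) i ≤ rowLen (insert ((i, j) : Cell) μ) d :=
        rowLen_anti hins hcon
      by_cases hdi : d = i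
      · have e0 : rowLen (insert ((i, j) : Cell) μ) d = rowLen μ d + 1 := by
          rw [rowLen_insert hnot d]
          simp [hdi]
        omega
      have e1 : rowLen (insert ((i, j) : Cell) μ) d = rowLen μ d := by
        rw [rowLen_insert hnot d]
        simp only
        rw [if_neg hdi]
      have e2 : rowLen (insert ((i, j) : Cell) μ) i = rowLen μ i + 1 := by
        rw [rowLen_insert hnot i]
        simp
      omega
    exact ⟨i, ⟨hid, hcond⟩, by rw [hj]⟩
  · rintro ⟨i', ⟨hid, hcond⟩, heq⟩
    obtain ⟨hi1, hi2⟩ := (Prod.mk.injEq _ _ _ _).mp heq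
    subst hi1
    subst hi2
    have hadd : Addable μ (i', rowLen μ i') := (addable_iff hμ i' _).mpr ⟨rfl, hcond⟩
    have hibound : i' ≤ μ.card := by
      by_cases hpos : 0 < rowLen μ i'
      · have := (lt_len_iff hμ i').mpr hpos
        have := len_le_card μ
        omega
      · rcases hcond with h1 | h1
        · omega
        · have : i' - 1 < len μ := (lt_len_iff hμ (i' - 1)).mpr (by omega)
          have := len_le_card μ
          omega
    refine ⟨⟨⟨by omega, by have := rowLen_le_card (μ := μ) i'; omega⟩, hadd⟩, ?_⟩
    rw [len_le_iff hadd.2 d, rowLen_insert hadd.1 d]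
    simp only
    rw [if_neg (by omega : ¬ d = i')]
    exact h0

lemma RC_eq_image (hμ : IsYD μ) (h0 : rowLen μ d = 0) :
    RC μ = ((Finset.range d).filter (fun i => rowLen μ (i + 1) < rowLen μ i)).image
      (fun i => ((i, rowLen μ i - 1) : Cell)) := by
  classical
  ext c
  obtain ⟨i, j⟩ := c
  simp only [RC, Finset.mem_image, Finset.mem_filter, Finset.mem_range]
  constructor
  · rintro ⟨hmem, hrem⟩
    obtain ⟨h1, h2⟩ := (removable_iff hμ i j).mp hrem
    have hid : i < d := by
      by_contra hcon
      push_neg at hcon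
      have := rowLen_anti hμ hcon
      omega
    exact ⟨i, ⟨hid, by omega⟩, by rw [Prod.mk.injEq]; omega⟩
  · rintro ⟨i', ⟨hid, hlt⟩, heq⟩
    obtain ⟨hi1, hi2⟩ := (Prod.mk.injEq _ _ _ _).mp heq
    subst hi1
    subst hi2
    have hrem : Removable μ (i', rowLen μ i' - 1) :=
      (removable_iff hμ i' _).mpr ⟨by omega, by omega⟩
    exact ⟨hrem.1, hrem⟩

lemma v_injOn (hμ : IsYD μ) :
    Set.InjOn (fun k => ((rowLen μ k : ℚ) - k)) (Finset.range d) := by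
  have hmono : ∀ a b : ℕ, a < b → ((rowLen μ b : ℚ) - b) < ((rowLen μ a : ℚ) - a) := by
    intro a b hab
    have h1 : rowLen μ b ≤ rowLen μ a := rowLen_anti hμ (le_of_lt hab)
    have h2 : (rowLen μ b : ℚ) ≤ (rowLen μ a : ℚ) := by exact_mod_cast h1
    have h3 : (a : ℚ) < b := by exact_mod_cast hab
    linarith
  intro a _ b _ hab
  rcases lt_trichotomy a b with h | h | h
  · exact absurd hab (ne_of_gt (hmono a b h))
  · exact h
  · exact absurd hab (ne_of_lt (hmono b a h))

lemma pieri_add (hd : 1 ≤ d) (hμ : IsYD μ) (h0 : rowLen μ d = 0) :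
    ∑ a ∈ ACd d μ, weylDim d (insert a μ) = d * weylDim d μ := by
  classical
  set Λ : ℕ → ℤ := fun k => (rowLen μ k : ℤ) with hΛ
  have hx : ∀ i, i < d → ∀ j < d, j ≠ i → (Λ i : ℚ) - (Λ j : ℚ) + (j : ℚ) - (i : ℚ) ≠ 0 := by
    intro i hi j hj hne heq
    have := v_injOn (d := d) hμ (by simpa using hj) (by simpa using hi)
      (by simp only [hΛ] at heq ⊢; push_cast at heq ⊢; linarith)
    exact hne this
  set S := (Finset.range d).filter (fun i => i = 0 ∨ rowLen μ i < rowLen μ (i - 1)) with hS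
  have hterm : ∀ i ∈ S, weylDim d (insert ((i, rowLen μ i) : Cell) μ) =
      (∏ j ∈ (Finset.range d).erase i,
        (((Λ i : ℚ) + ((1 : ℤ) : ℚ) - (Λ j : ℚ) + (j : ℚ) - (i : ℚ)) /
          ((Λ i : ℚ) - (Λ j : ℚ) + (j : ℚ) - (i : ℚ)))) * weylDimVec d Λ := by
    intro i hiS
    simp only [hS, Finset.mem_filter, Finset.mem_range] at hiS
    have hnot : ((i, rowLen μ i) : Cell) ∉ μ := fun h => by
      have := (mem_iff_lt_rowLen hμ _ _).mp h; omega
    have hcong : weylDim d (insert ((i, rowLen μ i) : Cell) μ) =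
        weylDimVec d (fun k => if k = i then Λ i + 1 else Λ k) := by
      unfold weylDim
      refine weylDimVec_congr d _ _ fun k _ => ?_
      rw [rowLen_insert hnot k]
      simp only [hΛ]
      split_ifs with h1
      · rw [h1]; push_cast; ring
      · rfl
    rw [hcong, weylDimVec_ratio d Λ i hiS.1 1 (hx i hiS.1)]
  have hsum : ∑ a ∈ ACd d μ, weylDim d (insert a μ) =
      ∑ i ∈ S, weylDim d (insert ((i, rowLen μ i) : Cell) μ) := by
    rw [ACd_eq_image hμ h0, Finset.sum_image]
    intro x _ y _ hxy
    exact ((Prod.mk.injEq _ _ _ _).mp hxy).1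
  rw [hsum, Finset.sum_congr rfl hterm, ← Finset.sum_mul]
  have hext : ∑ i ∈ S, ∏ j ∈ (Finset.range d).erase i,
        (((Λ i : ℚ) + ((1 : ℤ) : ℚ) - (Λ j : ℚ) + (j : ℚ) - (i : ℚ)) /
          ((Λ i : ℚ) - (Λ j : ℚ) + (j : ℚ) - (i : ℚ))) =
      ∑ i ∈ Finset.range d, ∏ j ∈ (Finset.range d).erase i,
        (((Λ i : ℚ) + ((1 : ℤ) : ℚ) - (Λ j : ℚ) + (j : ℚ) - (i : ℚ)) /
          ((Λ i : ℚ) - (Λ j : ℚ) + (j : ℚ) - (i : ℚ))) := by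
    refine Finset.sum_subset (Finset.filter_subset _ _) ?_
    intro i hi hniS
    simp only [hS, Finset.mem_filter, Finset.mem_range] at hniS
    rw [Finset.mem_range] at hi
    push_neg at hniS
    obtain ⟨hi0, hrow⟩ := hniS hi
    have heq : rowLen μ (i - 1) = rowLen μ i := by
      have := rowLen_anti hμ (Nat.sub_le i 1)
      omega
    refine Finset.prod_eq_zero (i := i - 1)
      (Finset.mem_erase.mpr ⟨by omega, Finset.mem_range.mpr (by omega)⟩) ?_
    have hnum : (Λ i : ℚ) + ((1 : ℤ) : ℚ) - (Λ (i - 1) : ℚ) + ((i - 1 : ℕ) : ℚ) - (i : ℚ) = 0 := by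
      simp only [hΛ, heq]
      have : ((i - 1 : ℕ) : ℚ) = (i : ℚ) - 1 := by
        have : (1 : ℕ) ≤ i := by omega
        push_cast [this]; ring
      rw [this]; push_cast; ring
    rw [hnum, zero_div]
  rw [hext]
  have hlag := lagrange_key (Finset.range d) (fun k => ((rowLen μ k : ℚ) - k)) (v_injOn hμ) 1
    one_ne_zero
  simp only [Finset.card_range] at hlag
  have hmatch : ∑ i ∈ Finset.range d, ∏ j ∈ (Finset.range d).erase i,
        (((Λ i : ℚ) + ((1 : ℤ) : ℚ) - (Λ j : ℚ) + (j : ℚ) - (i : ℚ)) /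
          ((Λ i : ℚ) - (Λ j : ℚ) + (j : ℚ) - (i : ℚ))) = (d : ℚ) := by
    rw [← hlag]
    refine Finset.sum_congr rfl fun i _ => Finset.prod_congr rfl fun j _ => ?_
    simp only [hΛ]
    push_cast
    congr 1 <;> ring
  rw [hmatch]
  rfl


lemma pieri_sub (hd : 1 ≤ d) (hμ : IsYD μ) (h0 : rowLen μ d = 0) :
    (∑ c ∈ RC μ, weylDim d (μ.erase c)) +
      (if rowLen μ (d - 1) = 0 then
        weylDimVec d (fun k => if k = d - 1 then (-1 : ℤ) else (rowLen μ k : ℤ)) else 0) =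
      d * weylDim d μ := by
  classical
  set Λ : ℕ → ℤ := fun k => (rowLen μ k : ℤ) with hΛ
  have hx : ∀ i, i < d → ∀ j < d, j ≠ i → (Λ i : ℚ) - (Λ j : ℚ) + (j : ℚ) - (i : ℚ) ≠ 0 := by
    intro i hi j hj hne heq
    have := v_injOn (d := d) hμ (by simpa using hj) (by simpa using hi)
      (by simp only [hΛ] at heq ⊢; push_cast at heq ⊢; linarith)
    exact hne this
  set G : ℕ → ℚ := fun i => ∏ j ∈ (Finset.range d).erase i,
      (((Λ i : ℚ) + ((-1 : ℤ) : ℚ) - (Λ j : ℚ) + (j : ℚ) - (i : ℚ)) /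
        ((Λ i : ℚ) - (Λ j : ℚ) + (j : ℚ) - (i : ℚ))) with hG
  set Srem := (Finset.range d).filter (fun i => rowLen μ (i + 1) < rowLen μ i) with hSrem
  -- each removable-row term
  have hterm : ∀ i ∈ Srem, weylDim d (μ.erase (i, rowLen μ i - 1)) = G i * weylDimVec d Λ := by
    intro i hiS
    simp only [hSrem, Finset.mem_filter, Finset.mem_range] at hiS
    have hpos : 0 < rowLen μ i := by omega
    have hmem : ((i, rowLen μ i - 1) : Cell) ∈ μ := (mem_iff_lt_rowLen hμ _ _).mpr (by omega)
    have hcong : weylDim d (μ.erase (i, rowLen μ i - 1)) =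
        weylDimVec d (fun k => if k = i then Λ i + (-1) else Λ k) := by
      unfold weylDim
      refine weylDimVec_congr d _ _ fun k _ => ?_
      rw [rowLen_erase hmem k]
      simp only [hΛ]
      split_ifs with h1
      · rw [h1]
        have : (1 : ℕ) ≤ rowLen μ i := hpos
        push_cast [this]
        ring
      · rfl
    rw [hcong, weylDimVec_ratio d Λ i hiS.1 (-1) (hx i hiS.1), hG]
  have hsum : ∑ c ∈ RC μ, weylDim d (μ.erase c) = ∑ i ∈ Srem, G i * weylDimVec d Λ := by
    rw [RC_eq_image hμ h0, Finset.sum_image (fun x _ y _ hxy =>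
      ((Prod.mk.injEq _ _ _ _).mp hxy).1)]
    exact Finset.sum_congr rfl hterm
  -- the extra term
  set S := (Finset.range d).filter
      (fun i => i = d - 1 ∨ rowLen μ (i + 1) < rowLen μ i) with hS
  have hSsplit : (∑ i ∈ Srem, G i * weylDimVec d Λ) +
      (if rowLen μ (d - 1) = 0 then
        weylDimVec d (fun k => if k = d - 1 then (-1 : ℤ) else (rowLen μ k : ℤ)) else 0) =
      ∑ i ∈ S, G i * weylDimVec d Λ := by
    by_cases hz : rowLen μ (d - 1) = 0
    · rw [if_pos hz]
      have hd1 : rowLen μ d = 0 := h0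
      have hnotmem : d - 1 ∉ Srem := by
        simp only [hSrem, Finset.mem_filter, Finset.mem_range]
        rintro ⟨-, hcon⟩
        have : rowLen μ (d - 1 + 1) ≤ rowLen μ (d - 1) := rowLen_anti hμ (by omega)
        omega
      have hSeq : S = insert (d - 1) Srem := by
        ext i
        simp only [hS, hSrem, Finset.mem_insert, Finset.mem_filter, Finset.mem_range]
        constructor
        · rintro ⟨hi, hor⟩
          rcases hor with h1 | h1
          · exact Or.inl h1
          · exact Or.inr ⟨hi, h1⟩
        · rintro (h1 | ⟨hi, h1⟩)
          · exact ⟨by omega, Or.inl h1⟩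
          · exact ⟨hi, Or.inr h1⟩
      rw [hSeq, Finset.sum_insert hnotmem]
      have hextra : weylDimVec d (fun k => if k = d - 1 then (-1 : ℤ) else (rowLen μ k : ℤ)) =
          G (d - 1) * weylDimVec d Λ := by
        have hcong : weylDimVec d (fun k => if k = d - 1 then (-1 : ℤ) else (rowLen μ k : ℤ)) =
            weylDimVec d (fun k => if k = d - 1 then Λ (d - 1) + (-1) else Λ k) := by
          refine weylDimVec_congr d _ _ fun k _ => ?_
          simp only [hΛ]
          split_ifs with h1
          · rw [hz]; ring
          · rfl
        rw [hcong, weylDimVec_ratio d Λ (d - 1) (by omega) (-1) (hx (d - 1) (by omega)), hG]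
      rw [hextra]
      ring
    · rw [if_neg hz]
      have hSeq : S = Srem := by
        ext i
        simp only [hS, hSrem, Finset.mem_filter, Finset.mem_range]
        constructor
        · rintro ⟨hi, hor⟩
          rcases hor with h1 | h1
          · subst h1
            refine ⟨hi, ?_⟩
            have e1 : d - 1 + 1 = d := by omega
            rw [e1, h0]
            omega
          · exact ⟨hi, h1⟩
        · rintro ⟨hi, h1⟩
          exact ⟨hi, Or.inr h1⟩
      rw [hSeq, add_zero]
  rw [hsum, hSsplit]
  -- extend to range d
  have hext : ∑ i ∈ S, G i * weylDimVec d Λ = ∑ i ∈ Finset.range d, G i * weylDimVec d Λ := by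
    refine Finset.sum_subset (Finset.filter_subset _ _) ?_
    intro i hi hniS
    simp only [hS, Finset.mem_filter, Finset.mem_range] at hniS
    rw [Finset.mem_range] at hi
    push_neg at hniS
    obtain ⟨hi1, hrow⟩ := hniS hi
    have heq : rowLen μ (i + 1) = rowLen μ i := by
      have : rowLen μ (i + 1) ≤ rowLen μ i := rowLen_anti hμ (by omega)
      omega
    have hG0 : G i = 0 := by
      rw [hG]
      refine Finset.prod_eq_zero (i := i + 1)
        (Finset.mem_erase.mpr ⟨by omega, Finset.mem_range.mpr (by omega)⟩) ?_
      have hnum : (Λ i : ℚ) + ((-1 : ℤ) : ℚ) - (Λ (i + 1) : ℚ) + ((i + 1 : ℕ) : ℚ) - (i : ℚ)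
          = 0 := by
        simp only [hΛ, heq]
        push_cast
        ring
      rw [hnum, zero_div]
    rw [hG0, zero_mul]
  rw [hext, ← Finset.sum_mul]
  have hlag := lagrange_key (Finset.range d) (fun k => ((rowLen μ k : ℚ) - k)) (v_injOn hμ)
    (-1) (by norm_num)
  simp only [Finset.card_range] at hlag
  have hmatch : ∑ i ∈ Finset.range d, G i = (d : ℚ) := by
    rw [← hlag]
    refine Finset.sum_congr rfl fun i _ => Finset.prod_congr rfl fun j _ => ?_
    simp only [hG, hΛ]
    push_cast
    congr 1 <;> ring
  rw [hmatch]
  rfl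

end Pieri


section Syt

/-- The set of saturated chains used in `sytCount`. -/
def ChainSet (μ : Finset Cell) : Type :=
  {T : ℕ → Finset Cell //
    (∀ k, IsYD (T k)) ∧ (∀ k, (T k).card = min k μ.card) ∧
    (∀ k, T k ⊆ T (k + 1)) ∧ (∀ k, μ.card ≤ k → T k = μ)}

lemma sytCount_eq (μ : Finset Cell) : sytCount μ = Nat.card (ChainSet μ) := rfl

lemma isYD_empty : IsYD (∅ : Finset Cell) := by
  intro a b _ h
  simp at h

lemma chain_mono {T : ℕ → Finset Cell} (h : ∀ k, T k ⊆ T (k + 1)) :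
    ∀ {k m : ℕ}, k ≤ m → T k ⊆ T m := by
  intro k m hkm
  induction m with
  | zero => have : k = 0 := by omega
            rw [this]
  | succ m ih =>
    rcases Nat.lt_or_ge k (m + 1) with h1 | h1
    · exact (ih (by omega)).trans (h m)
    · have : k = m + 1 := by omega
      rw [this]

instance chainSet_finite (μ : Finset Cell) : Finite (ChainSet μ) := by
  classical
  have hinj : Function.Injective
      (fun (T : ChainSet μ) => (fun k : Fin (μ.card + 1) => (⟨T.1 k,
        Finset.mem_powerset.mpr (by
          have h1 : T.1 k ⊆ T.1 μ.card := by
            rcases Nat.lt_or_ge (k : ℕ) μ.card with h | h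
            · exact chain_mono T.2.2.2.1 (le_of_lt h)
            · rw [T.2.2.2.2 _ h]
              rw [T.2.2.2.2 μ.card (le_refl _)]
          rw [T.2.2.2.2 μ.card (le_refl _)] at h1
          exact h1)⟩ : {s // s ∈ μ.powerset}))) := by
    intro T T' heq
    apply Subtype.ext
    funext k
    rcases Nat.lt_or_ge k (μ.card + 1) with h | h
    · exact congrArg Subtype.val (congrFun heq ⟨k, h⟩)
    · rw [T.2.2.2.2 k (by omega), T'.2.2.2.2 k (by omega)]
  exact Finite.of_injective _ hinj

lemma sytCount_empty : sytCount (∅ : Finset Cell) = 1 := by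
  rw [sytCount_eq]
  haveI : Unique (ChainSet (∅ : Finset Cell)) := by
    refine ⟨⟨⟨fun _ => ∅, fun k => isYD_empty, fun k => by simp, fun k => by simp,
      fun k _ => rfl⟩⟩, ?_⟩
    rintro ⟨T, h1, h2, h3, h4⟩
    apply Subtype.ext
    funext k
    have := h2 k
    simp only [Finset.card_empty, Nat.min_zero] at this
    exact Finset.card_eq_zero.mp this
  exact Nat.card_unique

open scoped Classical in
/-- pick the unique element of a singleton -/
noncomputable def pick (s : Finset Cell) : Cell :=
  if h : ∃ a, s = {a} then h.choose else (0, 0)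

lemma pick_spec {s : Finset Cell} {a : Cell} (h : s = {a}) : pick s = a := by
  have hex : ∃ b, s = {b} := ⟨a, h⟩
  unfold pick
  rw [dif_pos hex]
  have hs := hex.choose_spec
  exact Finset.singleton_injective (hs.symm.trans h)

lemma sytCount_rec {μ : Finset Cell} (hμ : IsYD μ) (hne : μ.Nonempty) :
    sytCount μ = ∑ c ∈ RC μ, sytCount (μ.erase c) := by
  classical
  obtain ⟨n, hn⟩ : ∃ n, μ.card = n + 1 :=
    ⟨μ.card - 1, by have := Finset.card_pos.mpr hne; omega⟩
  -- basic facts about chains in `ChainSet μ`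
  have hTn : ∀ T : ChainSet μ, T.1 n ⊆ μ ∧ (T.1 n).card = n := by
    intro T
    constructor
    · have h1 : T.1 n ⊆ T.1 (n + 1) := T.2.2.2.1 n
      rw [T.2.2.2.2 (n + 1) (by omega)] at h1
      exact h1
    · rw [T.2.2.1 n, hn]
      omega
  have hdiff : ∀ T : ChainSet μ, ∃ a, μ \ T.1 n = {a} := by
    intro T
    apply Finset.card_eq_one.mp
    rw [Finset.card_sdiff_of_subset (hTn T).1, (hTn T).2, hn]
    omega
  have hTn_eq : ∀ T : ChainSet μ, T.1 n = μ.erase (pick (μ \ T.1 n)) := by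
    intro T
    obtain ⟨a, ha⟩ := hdiff T
    rw [pick_spec ha, Finset.erase_eq, ← ha, Finset.sdiff_sdiff_eq_self (hTn T).1]
  have hpick_mem : ∀ T : ChainSet μ, pick (μ \ T.1 n) ∈ RC μ := by
    intro T
    obtain ⟨a, ha⟩ := hdiff T
    have hmem : pick (μ \ T.1 n) ∈ μ \ T.1 n := by
      rw [pick_spec ha, ha]
      exact Finset.mem_singleton_self a
    rw [Finset.mem_sdiff] at hmem
    refine Finset.mem_filter.mpr ⟨hmem.1, hmem.1, ?_⟩
    rw [← hTn_eq T]
    exact T.2.1 n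
  -- the equivalence
  have E : ChainSet μ ≃ (c : {c // c ∈ RC μ}) × ChainSet (μ.erase c.1) := by
    refine ⟨fun T => ⟨⟨pick (μ \ T.1 n), hpick_mem T⟩,
        ⟨fun k => T.1 (if k ≤ n then k else n), ?_, ?_, ?_, ?_⟩⟩,
      fun P => ⟨fun k => if k ≤ n then P.2.1 k else μ, ?_, ?_, ?_, ?_⟩, ?_, ?_⟩
    · exact fun k => T.2.1 _
    · intro k
      have hce : (μ.erase (pick (μ \ T.1 n))).card = n := by
        rw [Finset.card_erase_of_mem (Finset.mem_filter.mp (hpick_mem T)).1, hn]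
        omega
      show (T.1 (if k ≤ n then k else n)).card = min k (μ.erase (pick (μ \ T.1 n))).card
      rw [hce, T.2.2.1, hn]
      split_ifs with h <;> omega
    · intro k
      show T.1 (if k ≤ n then k else n) ⊆ T.1 (if k + 1 ≤ n then k + 1 else n)
      refine chain_mono T.2.2.2.1 ?_
      split_ifs with h1 h2 <;> omega
    · intro k hk
      have hce : (μ.erase (pick (μ \ T.1 n))).card = n := by
        rw [Finset.card_erase_of_mem (Finset.mem_filter.mp (hpick_mem T)).1, hn]
        omega
      replace hk : (μ.erase (pick (μ \ T.1 n))).card ≤ k := hk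
      rw [hce] at hk
      show T.1 (if k ≤ n then k else n) = μ.erase (pick (μ \ T.1 n))
      split_ifs with h
      · have hkn : k = n := by omega
        rw [hkn]
        exact hTn_eq T
      · exact hTn_eq T
    · intro k
      show IsYD (if k ≤ n then P.2.1 k else μ)
      split_ifs with h
      · exact P.2.2.1 k
      · exact hμ
    · intro k
      have hce : (μ.erase (P.1.1)).card = n := by
        rw [Finset.card_erase_of_mem (Finset.mem_filter.mp P.1.2).1, hn]
        omega
      show (if k ≤ n then P.2.1 k else μ).card = min k μ.card
      split_ifs with h
      · rw [P.2.2.2.1 k, hce, hn]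
        omega
      · rw [hn]
        omega
    · intro k
      show (if k ≤ n then P.2.1 k else μ) ⊆ (if k + 1 ≤ n then P.2.1 (k + 1) else μ)
      have hce : (μ.erase (P.1.1)).card = n := by
        rw [Finset.card_erase_of_mem (Finset.mem_filter.mp P.1.2).1, hn]
        omega
      split_ifs with h1 h2 h2
      · exact P.2.2.2.2.1 k
      · rw [P.2.2.2.2.2 k (by rw [hce]; omega)]
        exact Finset.erase_subset _ _
      · exact absurd h2 (by omega)
      · exact Finset.Subset.refl μ
    · intro k hk
      rw [hn] at hk
      show (if k ≤ n then P.2.1 k else μ) = μ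
      rw [if_neg (by omega)]
    · -- left inverse
      intro T
      apply Subtype.ext
      funext k
      show (if k ≤ n then T.1 (if k ≤ n then k else n) else μ) = T.1 k
      rcases le_or_gt k n with h | h
      · simp only [if_pos h]
      · rw [if_neg (by omega : ¬ k ≤ n), T.2.2.2.2 k (by omega)]
    · -- right inverse
      rintro ⟨⟨c, hc⟩, T'⟩
      have hcμ : c ∈ μ := (Finset.mem_filter.mp hc).1
      have hce : (μ.erase c).card = n := by
        rw [Finset.card_erase_of_mem hcμ, hn]
        omega
      have hval : (if n ≤ n then T'.1 n else μ) = μ.erase c := by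
        rw [if_pos (le_refl n)]
        refine T'.2.2.2.2 n ?_
        change (μ.erase c).card ≤ n
        omega
      have hpick : pick (μ \ (fun k => if k ≤ n then T'.1 k else μ) n) = c := by
        show pick (μ \ (if n ≤ n then T'.1 n else μ)) = c
        rw [hval]
        apply pick_spec
        rw [Finset.erase_eq, Finset.sdiff_sdiff_eq_self (Finset.singleton_subset_iff.mpr hcμ)]
      have he : μ.erase (pick (μ \ (fun k => if k ≤ n then T'.1 k else μ) n)) = μ.erase c := by
        rw [hpick]
      refine Sigma.ext (Subtype.ext hpick) ?_
      refine (Subtype.heq_iff_coe_eq ?_).mpr ?_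
      rotate_left
      · funext k
        show (if (if k ≤ n then k else n) ≤ n then T'.1 (if k ≤ n then k else n) else μ)
            = T'.1 k
        rcases le_or_gt k n with h | h
        · simp only [if_pos h]
        · rw [if_neg (by omega : ¬ k ≤ n), if_pos (le_refl n)]
          rw [T'.2.2.2.2 n (by change (μ.erase c).card ≤ n; omega),
            T'.2.2.2.2 k (by change (μ.erase c).card ≤ k; omega)]
      · intro x
        simp only [he]
  rw [sytCount_eq, Nat.card_congr E]
  letI : ∀ c : {c // c ∈ RC μ}, Fintype (ChainSet (μ.erase c.1)) := fun c => Fintype.ofFinite _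
  rw [Nat.card_eq_fintype_card, Fintype.card_sigma]
  rw [← Finset.sum_coe_sort (RC μ) (fun c => sytCount (μ.erase c))]
  refine Finset.sum_congr rfl fun c _ => ?_
  rw [sytCount_eq, Nat.card_eq_fintype_card]

end Syt


section Final

lemma mem_YDs_iff {μ : Finset Cell} {k : ℕ} : μ ∈ YDs k ↔ IsYD μ ∧ μ.card = k := by
  classical
  rw [YDs, Finset.mem_filter, Finset.mem_powerset]
  constructor
  · rintro ⟨-, h⟩; exact h
  · rintro ⟨h1, h2⟩
    refine ⟨?_, h1, h2⟩
    intro c hc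
    obtain ⟨i, j⟩ := c
    have := cell_bound h1 hc
    rw [Finset.mem_product, Finset.mem_range, Finset.mem_range]
    omega

lemma rowLen_empty (i : ℕ) : rowLen (∅ : Finset Cell) i = 0 := by
  rw [rowLen]
  simp

lemma weylDim_empty (d : ℕ) : weylDim d (∅ : Finset Cell) = 1 := by
  rw [weylDim, weylDimVec]
  refine Finset.prod_eq_one fun p hp => ?_
  simp only [Finset.mem_filter, Finset.mem_product, Finset.mem_range] at hp
  rw [rowLen_empty, rowLen_empty]
  have : (p.1 : ℚ) < (p.2 : ℚ) := by exact_mod_cast hp.2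
  have hne : (p.2 : ℚ) - (p.1 : ℚ) ≠ 0 := by intro h; linarith
  push_cast
  have h2 : (0 : ℚ) - 0 + (p.2 : ℚ) - (p.1 : ℚ) = (p.2 : ℚ) - (p.1 : ℚ) := by ring
  rw [h2, div_self hne]

lemma cell_bound' {μ : Finset Cell} (hμ : IsYD μ) {c : Cell} (h : c ∈ μ) :
    c.1 < μ.card ∧ c.2 < μ.card := by
  obtain ⟨i, j⟩ := c
  exact cell_bound hμ h

lemma sum_pairs (d k : ℕ) (f : Finset Cell → Cell → ℚ) :
    ∑ μ ∈ (YDs k).filter (fun μ => len μ ≤ d), ∑ a ∈ ACd d μ, f μ a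
      = ∑ ν ∈ (YDs (k + 1)).filter (fun ν => len ν ≤ d), ∑ c ∈ RC ν, f (ν.erase c) c := by
  classical
  rw [Finset.sum_sigma', Finset.sum_sigma']
  refine Finset.sum_nbij' (fun p => ⟨insert p.2 p.1, p.2⟩) (fun p => ⟨p.1.erase p.2, p.2⟩)
    ?_ ?_ ?_ ?_ ?_
  · rintro ⟨μ, a⟩ hp
    have hp' : μ ∈ (YDs k).filter (fun μ => len μ ≤ d) ∧ a ∈ ACd d μ := Finset.mem_sigma.mp hp
    obtain ⟨hμ', ha⟩ := hp'
    rw [Finset.mem_filter] at hμ'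
    obtain ⟨hμY, hlen⟩ := hμ'
    rw [mem_YDs_iff] at hμY
    rw [ACd, Finset.mem_filter] at ha
    obtain ⟨haAC, halen⟩ := ha
    rw [AC, Finset.mem_filter] at haAC
    obtain ⟨-, hadd⟩ := haAC
    have h1 : insert a μ ∈ (YDs (k + 1)).filter (fun ν => len ν ≤ d) := by
      rw [Finset.mem_filter, mem_YDs_iff]
      refine ⟨⟨hadd.2, ?_⟩, halen⟩
      rw [Finset.card_insert_of_notMem hadd.1, hμY.2]
    have h2 : a ∈ RC (insert a μ) := by
      rw [RC, Finset.mem_filter]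
      refine ⟨Finset.mem_insert_self _ _, Finset.mem_insert_self _ _, ?_⟩
      rw [Finset.erase_insert hadd.1]
      exact hμY.1
    exact Finset.mem_sigma.mpr ⟨h1, h2⟩
  · rintro ⟨ν, c⟩ hp
    have hp' : ν ∈ (YDs (k + 1)).filter (fun ν => len ν ≤ d) ∧ c ∈ RC ν :=
      Finset.mem_sigma.mp hp
    obtain ⟨hν', hc⟩ := hp'
    rw [Finset.mem_filter] at hν'
    obtain ⟨hνY, hlen⟩ := hν'
    rw [mem_YDs_iff] at hνY
    rw [RC, Finset.mem_filter] at hc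
    obtain ⟨hcν, -, hrem⟩ := hc
    have herase : IsYD (ν.erase c) := hrem
    have hrd : rowLen ν d = 0 := (len_le_iff hνY.1 d).mp hlen
    have h1 : ν.erase c ∈ (YDs k).filter (fun μ => len μ ≤ d) := by
      rw [Finset.mem_filter, mem_YDs_iff]
      refine ⟨⟨herase, ?_⟩, ?_⟩
      · rw [Finset.card_erase_of_mem hcν, hνY.2]
        omega
      · rw [len_le_iff herase d, rowLen_erase hcν d]
        split_ifs <;> omega
    have h2 : c ∈ ACd d (ν.erase c) := by
      rw [ACd, Finset.mem_filter, AC, Finset.mem_filter]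
      have hbox : c.1 < (ν.erase c).card + 1 ∧ c.2 < (ν.erase c).card + 1 := by
        have hb := cell_bound' hνY.1 hcν
        rw [Finset.card_erase_of_mem hcν]
        omega
      refine ⟨⟨?_, Finset.notMem_erase _ _, ?_⟩, ?_⟩
      · rw [Finset.mem_product, Finset.mem_range, Finset.mem_range]
        exact hbox
      · rw [Finset.insert_erase hcν]
        exact hνY.1
      · rw [Finset.insert_erase hcν]
        exact hlen
    exact Finset.mem_sigma.mpr ⟨h1, h2⟩
  · rintro ⟨μ, a⟩ hp
    have ha : a ∈ ACd d μ := (Finset.mem_sigma.mp hp).2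
    rw [ACd, Finset.mem_filter, AC, Finset.mem_filter] at ha
    have h1 : ((⟨insert a μ, a⟩ : Σ _ : Finset Cell, Cell).1.erase
        (⟨insert a μ, a⟩ : Σ _ : Finset Cell, Cell).2) = μ := Finset.erase_insert ha.1.2.1
    exact Sigma.ext h1 HEq.rfl
  · rintro ⟨ν, c⟩ hp
    have hc : c ∈ RC ν := (Finset.mem_sigma.mp hp).2
    rw [RC, Finset.mem_filter] at hc
    have h1 : insert ((⟨ν.erase c, c⟩ : Σ _ : Finset Cell, Cell).2)
        ((⟨ν.erase c, c⟩ : Σ _ : Finset Cell, Cell).1) = ν := Finset.insert_erase hc.1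
    exact Sigma.ext h1 HEq.rfl
  · rintro ⟨μ, a⟩ hp
    have ha : a ∈ ACd d μ := (Finset.mem_sigma.mp hp).2
    rw [ACd, Finset.mem_filter, AC, Finset.mem_filter] at ha
    show f μ a = f ((insert a μ).erase a) a
    rw [Finset.erase_insert ha.1.2.1]


lemma SW (d : ℕ) (hd : 1 ≤ d) (n : ℕ) :
    ((d : ℚ)) ^ n = ∑ μ ∈ (YDs n).filter (fun μ => len μ ≤ d),
      (sytCount μ : ℚ) * weylDim d μ := by
  classical
  induction n with
  | zero =>
    have hset : (YDs 0).filter (fun μ => len μ ≤ d) = {∅} := by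
      ext μ
      rw [Finset.mem_filter, mem_YDs_iff, Finset.mem_singleton]
      constructor
      · rintro ⟨⟨h1, h2⟩, h3⟩
        exact Finset.card_eq_zero.mp h2
      · rintro rfl
        refine ⟨⟨isYD_empty, Finset.card_empty⟩, ?_⟩
        rw [len]
        simp
    rw [hset, Finset.sum_singleton, sytCount_empty, weylDim_empty]
    norm_num
  | succ n ih =>
    have step1 : ((d : ℚ)) ^ (n + 1) = ∑ μ ∈ (YDs n).filter (fun μ => len μ ≤ d),
        (sytCount μ : ℚ) * ((d : ℚ) * weylDim d μ) := by
      rw [pow_succ, ih, Finset.sum_mul]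
      exact Finset.sum_congr rfl fun μ _ => by ring
    rw [step1]
    have step2 : ∀ μ ∈ (YDs n).filter (fun μ => len μ ≤ d),
        (sytCount μ : ℚ) * ((d : ℚ) * weylDim d μ) =
          ∑ a ∈ ACd d μ, (sytCount μ : ℚ) * weylDim d (insert a μ) := by
      intro μ hμ'
      rw [Finset.mem_filter, mem_YDs_iff] at hμ'
      rw [← pieri_add hd hμ'.1.1 ((len_le_iff hμ'.1.1 d).mp hμ'.2), Finset.mul_sum]
    rw [Finset.sum_congr rfl step2,
      sum_pairs d n (fun μ a => (sytCount μ : ℚ) * weylDim d (insert a μ))]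
    refine Finset.sum_congr rfl fun ν hν => ?_
    rw [Finset.mem_filter, mem_YDs_iff] at hν
    have hνne : ν.Nonempty := Finset.card_pos.mp (by rw [hν.1.2]; omega)
    have hstep : ∀ c ∈ RC ν, (sytCount (ν.erase c) : ℚ) * weylDim d (insert c (ν.erase c))
        = (sytCount (ν.erase c) : ℚ) * weylDim d ν := by
      intro c hc
      rw [Finset.insert_erase (Finset.mem_filter.mp hc).1]
    rw [Finset.sum_congr rfl hstep, ← Finset.sum_mul]
    congr 1
    rw [sytCount_rec hν.1.1 hνne]
    push_cast
    rfl

end Final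



/-- for all `d ≥ 1` and `n ≥ 1`,
`d^{n+1} = Σ_{λ ⊢ n−1, len(λ) ≤ d} (Σ_{a ∈ AC_d(λ)} f^{λ∪a}) · m_λ
          + Σ_{μ ⊢ n, len(μ) ≤ d−1} f^μ · m_{(μ_1,…,μ_{d−1},−1)}`. -/
theorem stmt16 (d n : ℕ) (hd : 1 ≤ d) (hn : 1 ≤ n) :
    ((d : ℚ)) ^ (n + 1) =
      (∑ μ ∈ (YDs (n - 1)).filter (fun μ => len μ ≤ d),
        (∑ a ∈ ACd d μ, (sytCount (insert a μ) : ℚ)) * weylDim d μ) +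
      ∑ μ ∈ (YDs n).filter (fun μ => len μ ≤ d - 1),
        (sytCount μ : ℚ) *
          weylDimVec d (fun i => if i = d - 1 then -1 else (rowLen μ i : ℤ)) := by
  classical
  have hm : n - 1 + 1 = n := by omega
  have key1 : (∑ μ ∈ (YDs (n - 1)).filter (fun μ => len μ ≤ d),
      (∑ a ∈ ACd d μ, (sytCount (insert a μ) : ℚ)) * weylDim d μ)
      = ∑ ν ∈ (YDs n).filter (fun ν => len ν ≤ d),
        (sytCount ν : ℚ) * ∑ c ∈ RC ν, weylDim d (ν.erase c) := by
    have e1 : ∀ μ ∈ (YDs (n - 1)).filter (fun μ => len μ ≤ d),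
        (∑ a ∈ ACd d μ, (sytCount (insert a μ) : ℚ)) * weylDim d μ
          = ∑ a ∈ ACd d μ, (sytCount (insert a μ) : ℚ) * weylDim d μ :=
      fun μ _ => Finset.sum_mul _ _ _
    rw [Finset.sum_congr rfl e1]
    have e2 := sum_pairs d (n - 1) (fun μ a => (sytCount (insert a μ) : ℚ) * weylDim d μ)
    rw [hm] at e2
    rw [e2]
    refine Finset.sum_congr rfl fun ν hν => ?_
    have e3 : ∀ c ∈ RC ν, (sytCount (insert c (ν.erase c)) : ℚ) * weylDim d (ν.erase c)
        = (sytCount ν : ℚ) * weylDim d (ν.erase c) := by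
      intro c hc
      rw [Finset.insert_erase (Finset.mem_filter.mp hc).1]
    rw [Finset.sum_congr rfl e3, ← Finset.mul_sum]
  have key2 : (∑ μ ∈ (YDs n).filter (fun μ => len μ ≤ d - 1),
      (sytCount μ : ℚ) *
        weylDimVec d (fun i => if i = d - 1 then -1 else (rowLen μ i : ℤ)))
      = ∑ μ ∈ (YDs n).filter (fun μ => len μ ≤ d),
        (sytCount μ : ℚ) * (if rowLen μ (d - 1) = 0 then
          weylDimVec d (fun k => if k = d - 1 then (-1 : ℤ) else (rowLen μ k : ℤ)) else 0) := by
    have hff : (YDs n).filter (fun μ => len μ ≤ d - 1)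
        = ((YDs n).filter (fun μ => len μ ≤ d)).filter (fun μ => len μ ≤ d - 1) := by
      rw [Finset.filter_filter]
      refine Finset.filter_congr fun μ _ => ?_
      constructor
      · intro h; exact ⟨by omega, h⟩
      · intro h; exact h.2
    rw [hff, Finset.sum_filter]
    refine Finset.sum_congr rfl fun μ hμ' => ?_
    rw [Finset.mem_filter, mem_YDs_iff] at hμ'
    rw [mul_ite, mul_zero]
    have hiff : len μ ≤ d - 1 ↔ rowLen μ (d - 1) = 0 := len_le_iff hμ'.1.1 (d - 1)
    by_cases hcase : len μ ≤ d - 1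
    · rw [if_pos hcase, if_pos (hiff.mp hcase)]
    · rw [if_neg hcase, if_neg (fun h => hcase (hiff.mpr h))]
  rw [key1, key2, ← Finset.sum_add_distrib]
  have key3 : ∀ μ ∈ (YDs n).filter (fun μ => len μ ≤ d),
      ((sytCount μ : ℚ) * ∑ c ∈ RC μ, weylDim d (μ.erase c)) +
        (sytCount μ : ℚ) * (if rowLen μ (d - 1) = 0 then
          weylDimVec d (fun k => if k = d - 1 then (-1 : ℤ) else (rowLen μ k : ℤ)) else 0)
      = (d : ℚ) * ((sytCount μ : ℚ) * weylDim d μ) := by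
    intro μ hμ'
    rw [Finset.mem_filter, mem_YDs_iff] at hμ'
    rw [← mul_add, pieri_sub hd hμ'.1.1 ((len_le_iff hμ'.1.1 d).mp hμ'.2)]
    ring
  rw [Finset.sum_congr rfl key3, ← Finset.mul_sum, ← SW d hd n, pow_succ]
  ring
end

section
/- On the Hilbert space (ℂ^d)^{⊗(n+1)} (d ≥ 1, n ≥ 1), let σ_n^c be the contraction operator defined on the computational basis by σ_n^c |x_1,…,x_{n+1}⟩ = δ_{x_n, x_{n+1}} |x_1,…,x_{n−1}⟩ ⊗ (Σ_{k=1}^d |k,k⟩), let π be the unitary permuting the first n tensor factors by the cycle (1 2 … n) (and acting trivially on the last factor), and set ρ := Σ_{k=1}^n π^k σ_n^c π^{−k}. Then ρ commutes with every permutation of the first n tensor factors: for each τ ∈ S_n, letting P_τ denote the unitary permuting the first n tensor factors according to τ (and acting trivially on the last factor), one has P_τ ρ = ρ P_τ. In particular π ρ = ρ π. -/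
open Matrix
open scoped BigOperators ComplexOrder

noncomputable section

/-- The contraction operator `σ_n^c` on `(ℂ^d)^{⊗(n+1)}`:
`σ_n^c |x₁,…,x_{n+1}⟩ = δ_{x_n,x_{n+1}} |x₁,…,x_{n−1}⟩ ⊗ Σ_k |k,k⟩`.
Qudits are indexed 0-based by `Fin (n+1)`, so the `n`-th and `(n+1)`-th qudits are the
indices `n−1` and `n`. -/
def contrMat (d n : ℕ) : Matrix (Fin (n + 1) → Fin d) (Fin (n + 1) → Fin d) ℂ :=
  Matrix.of fun x' x =>
    if (∀ i : Fin (n + 1), (i : ℕ) + 2 ≤ n → x' i = x i) ∧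
        x ⟨n - 1, by omega⟩ = x (Fin.last n) ∧ x' ⟨n - 1, by omega⟩ = x' (Fin.last n)
      then (1 : ℂ) else 0

/-- The operator `P_τ` permuting the first `n` tensor factors of `(ℂ^d)^{⊗(n+1)}` by
`τ ∈ S_n` and acting trivially on the last factor:
`P_τ |x₁,…,x_n,x_{n+1}⟩ = |x_{τ⁻¹(1)},…,x_{τ⁻¹(n)},x_{n+1}⟩`. -/
def permMat (d n : ℕ) (τ : Equiv.Perm (Fin n)) :
    Matrix (Fin (n + 1) → Fin d) (Fin (n + 1) → Fin d) ℂ :=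
  Matrix.of fun x' x =>
    if (∀ i : Fin n, x' (Fin.castSucc i) = x (Fin.castSucc (τ⁻¹ i))) ∧
        x' (Fin.last n) = x (Fin.last n)
      then (1 : ℂ) else 0

def s17ext (n : ℕ) (τ : Equiv.Perm (Fin n)) : Equiv.Perm (Fin (n + 1)) where
  toFun i := Fin.lastCases (Fin.last n) (fun j => (τ j).castSucc) i
  invFun i := Fin.lastCases (Fin.last n) (fun j => (τ⁻¹ j).castSucc) i
  left_inv i := by cases i using Fin.lastCases <;> simp
  right_inv i := by cases i using Fin.lastCases <;> simp

@[simp] lemma s17ext_castSucc (n : ℕ) (τ : Equiv.Perm (Fin n)) (i : Fin n) :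
    s17ext n τ i.castSucc = (τ i).castSucc := by simp [s17ext]

@[simp] lemma s17ext_last (n : ℕ) (τ : Equiv.Perm (Fin n)) :
    s17ext n τ (Fin.last n) = Fin.last n := by simp [s17ext]

def s17g (d n : ℕ) (τ : Equiv.Perm (Fin n)) (x : Fin (n + 1) → Fin d) : Fin (n + 1) → Fin d :=
  fun i => x (s17ext n τ⁻¹ i)

@[simp] lemma s17g_castSucc (d n : ℕ) (τ : Equiv.Perm (Fin n)) (x : Fin (n + 1) → Fin d)
    (i : Fin n) : s17g d n τ x i.castSucc = x ((τ⁻¹ i).castSucc) := by simp [s17g]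

@[simp] lemma s17g_last (d n : ℕ) (τ : Equiv.Perm (Fin n)) (x : Fin (n + 1) → Fin d) :
    s17g d n τ x (Fin.last n) = x (Fin.last n) := by simp [s17g]

lemma s17g_g (d n : ℕ) (τ σ : Equiv.Perm (Fin n)) (x : Fin (n + 1) → Fin d) :
    s17g d n τ (s17g d n σ x) = s17g d n (τ * σ) x := by
  funext i
  cases i using Fin.lastCases with
  | last => simp
  | cast j => simp [_root_.mul_inv_rev, Equiv.Perm.mul_apply]

lemma s17g_one (d n : ℕ) (x : Fin (n + 1) → Fin d) : s17g d n 1 x = x := by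
  funext i
  cases i using Fin.lastCases <;> simp

lemma s17g_cancel (d n : ℕ) (τ : Equiv.Perm (Fin n)) (x : Fin (n + 1) → Fin d) :
    s17g d n τ (s17g d n τ⁻¹ x) = x := by
  rw [s17g_g, mul_inv_cancel, s17g_one]

lemma s17g_cancel' (d n : ℕ) (τ : Equiv.Perm (Fin n)) (x : Fin (n + 1) → Fin d) :
    s17g d n τ⁻¹ (s17g d n τ x) = x := by
  rw [s17g_g, inv_mul_cancel, s17g_one]

lemma permMat_eq (d n : ℕ) (τ : Equiv.Perm (Fin n)) :
    permMat d n τ = Matrix.of fun x' x => if x' = s17g d n τ x then (1 : ℂ) else 0 := by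
  ext x' x
  simp only [permMat, Matrix.of_apply]
  refine if_congr ?_ rfl rfl
  constructor
  · rintro ⟨h1, h2⟩
    funext i
    cases i using Fin.lastCases with
    | last => simpa using h2
    | cast j => simpa using h1 j
  · rintro rfl
    exact ⟨fun i => by simp, by simp⟩

lemma permMat_mul (d n : ℕ) (τ : Equiv.Perm (Fin n))
    (M : Matrix (Fin (n + 1) → Fin d) (Fin (n + 1) → Fin d) ℂ) :
    permMat d n τ * M = Matrix.of fun x' x => M (s17g d n τ⁻¹ x') x := by
  ext x' x
  rw [permMat_eq, Matrix.mul_apply]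
  simp only [Matrix.of_apply]
  have key : ∀ y, (if x' = s17g d n τ y then (1 : ℂ) else 0) =
      if s17g d n τ⁻¹ x' = y then 1 else 0 := by
    intro y
    refine if_congr ⟨fun h => ?_, fun h => ?_⟩ rfl rfl
    · rw [h, s17g_cancel']
    · rw [← h, s17g_cancel]
  simp only [key, ite_mul, one_mul, zero_mul]
  simp

lemma mul_permMat (d n : ℕ) (τ : Equiv.Perm (Fin n))
    (M : Matrix (Fin (n + 1) → Fin d) (Fin (n + 1) → Fin d) ℂ) :
    M * permMat d n τ = Matrix.of fun x' x => M x' (s17g d n τ x) := by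
  ext x' x
  rw [permMat_eq, Matrix.mul_apply]
  simp only [Matrix.of_apply, mul_ite, mul_one, mul_zero]
  simp

lemma permMat_mul_permMat (d n : ℕ) (τ σ : Equiv.Perm (Fin n)) :
    permMat d n τ * permMat d n σ = permMat d n (τ * σ) := by
  rw [permMat_mul, permMat_eq d n σ, permMat_eq d n (τ * σ)]
  ext x' x
  simp only [Matrix.of_apply]
  refine if_congr ⟨fun h => ?_, fun h => ?_⟩ rfl rfl
  · rw [← s17g_cancel d n τ x', h, s17g_g]
  · rw [h, ← s17g_g, s17g_cancel']

lemma permMat_one (d n : ℕ) : permMat d n 1 = (1 : Matrix (Fin (n + 1) → Fin d) _ ℂ) := by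
  rw [permMat_eq]
  ext x' x
  simp [s17g_one, Matrix.one_apply]

lemma permMat_pow (d n : ℕ) (τ : Equiv.Perm (Fin n)) (k : ℕ) :
    permMat d n τ ^ k = permMat d n (τ ^ k) := by
  induction k with
  | zero => simp [permMat_one]
  | succ k ih => rw [pow_succ, pow_succ, ih, permMat_mul_permMat]

lemma permMat_inv (d n : ℕ) (τ : Equiv.Perm (Fin n)) :
    (permMat d n τ)⁻¹ = permMat d n τ⁻¹ :=
  Matrix.inv_eq_right_inv (by rw [permMat_mul_permMat, mul_inv_cancel, permMat_one])


def genContr (d n : ℕ) (j : Fin n) :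
    Matrix (Fin (n + 1) → Fin d) (Fin (n + 1) → Fin d) ℂ :=
  Matrix.of fun x' x =>
    if (∀ i : Fin n, i ≠ j → x' i.castSucc = x i.castSucc) ∧
        x j.castSucc = x (Fin.last n) ∧ x' j.castSucc = x' (Fin.last n)
      then (1 : ℂ) else 0

lemma contr_eq (d n : ℕ) (hn : 1 ≤ n) :
    contrMat d n = genContr d n ⟨n - 1, by omega⟩ := by
  ext x' x
  simp only [contrMat, genContr, Matrix.of_apply]
  refine if_congr (and_congr ?_ (and_congr ?_ ?_)) rfl rfl
  · constructor
    · intro h i hi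
      apply h
      have hiv : (i : ℕ) ≠ n - 1 := fun hc => hi (Fin.ext hc)
      have := i.isLt
      simp only [Fin.coe_castSucc]
      omega
    · intro h i hi
      have hilt : (i : ℕ) < n := by omega
      have := h ⟨(i : ℕ), hilt⟩ (by
        simp only [ne_eq, Fin.mk.injEq]
        omega)
      simpa [Fin.castSucc_mk] using this
  · simp [Fin.castSucc_mk]
  · simp [Fin.castSucc_mk]

lemma permMat_genContr (d n : ℕ) (τ : Equiv.Perm (Fin n)) (j : Fin n) :
    permMat d n τ * genContr d n j = genContr d n (τ j) * permMat d n τ := by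
  rw [permMat_mul, mul_permMat]
  ext x' x
  simp only [Matrix.of_apply, genContr]
  refine if_congr ?_ rfl rfl
  constructor
  · rintro ⟨h1, h2, h3⟩
    refine ⟨fun i hi => ?_, by simpa using h2, by simpa using h3⟩
    have hij : τ⁻¹ i ≠ j := fun hc => hi (by rw [← hc]; exact (τ.apply_symm_apply i).symm)
    simpa using h1 (τ⁻¹ i) hij
  · rintro ⟨h1, h2, h3⟩
    refine ⟨fun i hi => ?_, by simpa using h2, by simpa using h3⟩
    have hij : τ i ≠ τ j := fun hc => hi (τ.injective hc)
    simpa using h1 (τ i) hij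

open Fin.NatCast in
lemma finRotate_pow_apply (m k : ℕ) (j : Fin (m + 1)) :
    ((finRotate (m + 1)) ^ k) j = j + (k : Fin (m + 1)) := by
  induction k with
  | zero => simp
  | succ k ih =>
    rw [pow_succ', Equiv.Perm.mul_apply, ih, finRotate_succ_apply]
    have hc : ((k + 1 : ℕ) : Fin (m + 1)) = (k : Fin (m + 1)) + 1 := by push_cast; ring
    rw [hc, add_assoc]

open Fin.NatCast in
lemma rot_val (m k : ℕ) (hk1 : 1 ≤ k) (hk2 : k ≤ m + 1) :
    ((finRotate (m + 1)) ^ k) (Fin.last m) = ⟨k - 1, by omega⟩ := by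
  rw [finRotate_pow_apply]
  apply Fin.ext
  rw [Fin.add_def]
  simp only [Fin.val_last, Fin.val_natCast]
  rcases eq_or_lt_of_le hk2 with h | h
  · rw [← h, Nat.mod_self, Nat.add_zero, Nat.mod_eq_of_lt (by omega)]
    omega
  · rw [Nat.mod_eq_of_lt h, Nat.mod_eq_sub_mod (by omega), Nat.mod_eq_of_lt (by omega)]
    omega


/-- `ρ := Σ_{k=1}^n π^k σ_n^c π^{−k}` (with `π` the cycle `(1 2 … n)` on the
first `n` factors) commutes with every permutation of the first `n` tensor factors, in
particular with `π`. -/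
theorem stmt17 (d n : ℕ) (hd : 1 ≤ d) (hn : 1 ≤ n)
    (ρ : Matrix (Fin (n + 1) → Fin d) (Fin (n + 1) → Fin d) ℂ)
    (hρ : ρ = ∑ k ∈ Finset.Icc 1 n,
      (permMat d n (finRotate n)) ^ k * contrMat d n * ((permMat d n (finRotate n)) ^ k)⁻¹) :
    (∀ τ : Equiv.Perm (Fin n), permMat d n τ * ρ = ρ * permMat d n τ) ∧
      permMat d n (finRotate n) * ρ = ρ * permMat d n (finRotate n) := by
  obtain ⟨m, rfl⟩ : ∃ m, n = m + 1 := ⟨n - 1, by omega⟩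
  have hsum : ρ = ∑ j : Fin (m + 1), genContr d (m + 1) j := by
    rw [hρ]
    refine Finset.sum_bij
      (fun k hk => (⟨k - 1, by simp only [Finset.mem_Icc] at hk; omega⟩ : Fin (m + 1)))
      (fun a ha => Finset.mem_univ _) ?_ ?_ ?_
    · intro a ha b hb hab
      simp only [Finset.mem_Icc] at ha hb
      simp only [Fin.mk.injEq] at hab
      omega
    · intro b _
      exact ⟨(b : ℕ) + 1, by simp only [Finset.mem_Icc]; omega, by apply Fin.ext; simp⟩
    · intro k hk
      simp only [Finset.mem_Icc] at hk
      rw [contr_eq d (m + 1) (by omega), permMat_pow, permMat_inv, permMat_genContr,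
        mul_assoc, permMat_mul_permMat, mul_inv_cancel, permMat_one, mul_one]
      congr 1
      have h0 : (⟨m + 1 - 1, by omega⟩ : Fin (m + 1)) = Fin.last m := rfl
      rw [h0, rot_val m k hk.1 hk.2]
  have main : ∀ τ : Equiv.Perm (Fin (m + 1)),
      permMat d (m + 1) τ * ρ = ρ * permMat d (m + 1) τ := by
    intro τ
    rw [hsum, Finset.mul_sum, Finset.sum_mul]
    calc ∑ j, permMat d (m + 1) τ * genContr d (m + 1) j
        = ∑ j, genContr d (m + 1) (τ j) * permMat d (m + 1) τ :=
          Finset.sum_congr rfl fun j _ => permMat_genContr d (m + 1) τ j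
      _ = ∑ j, genContr d (m + 1) j * permMat d (m + 1) τ :=
          Equiv.sum_comp τ (fun j => genContr d (m + 1) j * permMat d (m + 1) τ)
  exact ⟨main, main _⟩


end
end
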